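/- Let ξ be a closed conformal vector field on a Riemannian manifold M̃ with conformal factor ψ_ξ, let Ξ be a leaf of the orthogonal distribution ξ^⊥ on which ⟨ξ,ξ⟩ = 1, and let η be another closed conformal vector field on M̃ with conformal factor ψ_η. Then U = η − ⟨η, ξ⟩ξ is a closed conformal vector field on Ξ (with the induced metric), with conformal factor ψ_U = ψ_η − ψ_ξ ⟨η, ξ⟩. -/
import Mathlib


set_option autoImplicit false

/-- Abstract data of an `n`-dimensional (oriented) Riemannian manifold: tangent spaces,
Riemannian metric, Levi-Civita covariant derivative, directional derivative of functions,
divergence, Laplacian, gradient, Ricci tensor, curvature tensor, exponential map,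
velocity of curves and the Riemannian volume measure.  The ambient `MetricSpace`
structure on `M` plays the role of the Riemannian (geodesic) distance. -/
structure RiemannianManifold (M : Type) [MetricSpace M] [MeasurableSpace M] (n : ℕ) : Type 1 where
  /-- the tangent space at each point -/
  T : M → Type
  [acg : ∀ p, AddCommGroup (T p)]
  [mod : ∀ p, Module ℝ (T p)]
  [fd : ∀ p, FiniteDimensional ℝ (T p)]
  findim : ∀ p, Module.finrank ℝ (T p) = n
  /-- the Riemannian metric tensor -/
  g : ∀ p, T p → T p → ℝ
  g_symm : ∀ p v w, g p v w = g p w v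
  g_add_left : ∀ p u v w, g p (u + v) w = g p u w + g p v w
  g_smul_left : ∀ p (a : ℝ) v w, g p (a • v) w = a * g p v w
  g_nonneg : ∀ p v, 0 ≤ g p v v
  g_pos : ∀ p v, v ≠ 0 → 0 < g p v v
  /-- predicate selecting the smooth vector fields -/
  Smooth : (∀ p, T p) → Prop
  /-- the Levi-Civita covariant derivative `∇_X Y` -/
  cov : (∀ p, T p) → (∀ p, T p) → (∀ p, T p)
  /-- the directional derivative `X(f)` of a function along a vector field -/
  Dvf : (∀ p, T p) → (M → ℝ) → (M → ℝ)
  /-- metric compatibility of the Levi-Civita connection -/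
  compat : ∀ X Y Z p, Dvf X (fun q => g q (Y q) (Z q)) p
      = g p ((cov X Y) p) (Z p) + g p (Y p) ((cov X Z) p)
  /-- the divergence of a vector field -/
  div : (∀ p, T p) → M → ℝ
  /-- the Laplace-Beltrami operator -/
  lap : (M → ℝ) → (M → ℝ)
  /-- the Riemannian gradient -/
  grad : (M → ℝ) → ∀ p, T p
  grad_def : ∀ f X p, g p ((grad f) p) (X p) = Dvf X f p
  /-- the Ricci tensor -/
  ric : ∀ p, T p → T p → ℝ
  ric_symm : ∀ p v w, ric p v w = ric p w v
  /-- the curvature tensor `R(X,Y)Z`, with the convention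
  `R(X,Y)Z = ∇_Y ∇_X Z − ∇_X ∇_Y Z + ∇_{[X,Y]} Z` -/
  Rcurv : ∀ p, T p → T p → T p → T p
  /-- the exponential map -/
  exp : ∀ p, T p → M
  /-- the velocity vector of a curve -/
  vel : ∀ (γ : ℝ → M) (t : ℝ), T (γ t)
  /-- the Riemannian volume measure (determined by the orientation) -/
  vol : MeasureTheory.Measure M

attribute [instance] RiemannianManifold.acg RiemannianManifold.mod RiemannianManifold.fd

namespace RiemannianManifold

variable {M : Type} [MetricSpace M] [MeasurableSpace M] {n : ℕ}

/-- the pointwise norm of a tangent vector -/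
noncomputable def nrm (S : RiemannianManifold M n) (p : M) (v : S.T p) : ℝ :=
  Real.sqrt (S.g p v v)

/-- `ξ` is a closed conformal vector field with conformal factor `ψ`:
`∇_X ξ = ψ X` for every vector field `X`. -/
def ClosedConformal (S : RiemannianManifold M n) (ξ : ∀ p, S.T p) (ψ : M → ℝ) : Prop :=
  S.Smooth ξ ∧ ∀ X : ∀ p, S.T p, S.Smooth X → S.cov X ξ = fun p => ψ p • X p

/-- `ξ` is homothetic: closed conformal with constant conformal factor `c`. -/
def Homothetic (S : RiemannianManifold M n) (ξ : ∀ p, S.T p) (c : ℝ) : Prop :=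
  S.ClosedConformal ξ (fun _ => c)

/-- `ξ` is parallel: closed conformal with vanishing conformal factor. -/
def Parallel (S : RiemannianManifold M n) (ξ : ∀ p, S.T p) : Prop :=
  S.Homothetic ξ 0

/-- nonpositive Ricci curvature -/
def NonposRicci (S : RiemannianManifold M n) : Prop :=
  ∀ p (v : S.T p), S.ric p v v ≤ 0

/-- nonnegative Ricci curvature -/
def NonnegRicci (S : RiemannianManifold M n) : Prop :=
  ∀ p (v : S.T p), 0 ≤ S.ric p v v

/-- constant sectional curvature `c` -/
def ConstCurv (S : RiemannianManifold M n) (c : ℝ) : Prop :=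
  ∀ p (v w : S.T p), S.g p (S.Rcurv p v w v) w
    = c * (S.g p v v * S.g p w w - (S.g p v w) ^ 2)

end RiemannianManifold

/-- A metric space is (metrically) a round `n`-sphere of some radius `R`, i.e. it is
isometric to the sphere of radius `R` of `ℝ^{n+1}` endowed with its intrinsic
(great-circle) Riemannian distance. -/
def IsRoundSphere (n : ℕ) (X : Type) [MetricSpace X] : Prop :=
  ∃ R : ℝ, 0 < R ∧ ∃ e : X ≃ Metric.sphere (0 : EuclideanSpace ℝ (Fin (n + 1))) R,
    ∀ a b : X, dist a b
      = R * Real.arccos ((@inner ℝ _ _ (e a : EuclideanSpace ℝ (Fin (n + 1)))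
          (e b : EuclideanSpace ℝ (Fin (n + 1)))) / R ^ 2)

/-- Data of an oriented hypersurface `x : M → M'` of a Riemannian manifold:
an isometric immersion together with a global unit normal `N`, the associated
shape operator `A(X) = −∇̃_X N` and the mean curvature `H = (1/n) tr A`. -/
structure Hypersurface {M M' : Type} [MetricSpace M] [MeasurableSpace M] [MetricSpace M'] [MeasurableSpace M'] {n : ℕ} (SM : RiemannianManifold M n) (St : RiemannianManifold M' (n + 1)) where
  x : M → M'
  /-- the differential of the immersion -/
  dx : ∀ p, SM.T p →ₗ[ℝ] St.T (x p)
  dx_isom : ∀ p v w, St.g (x p) (dx p v) (dx p w) = SM.g p v w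
  /-- the unit normal giving the orientation -/
  N : ∀ p, St.T (x p)
  N_unit : ∀ p, St.g (x p) (N p) (N p) = 1
  N_perp : ∀ p v, St.g (x p) (dx p v) (N p) = 0
  /-- the shape operator `A(X) = −∇̃_X N` -/
  A : ∀ p, SM.T p →ₗ[ℝ] SM.T p
  A_symm : ∀ p v w, SM.g p (A p v) w = SM.g p v (A p w)
  /-- the mean curvature -/
  H : M → ℝ
  H_def : ∀ p, (n : ℝ) * H p = LinearMap.trace ℝ (SM.T p) (A p)

namespace Hypersurface

variable {M M' : Type} [MetricSpace M] [MeasurableSpace M]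
    [MetricSpace M'] [MeasurableSpace M'] {n : ℕ}
    {SM : RiemannianManifold M n} {St : RiemannianManifold M' (n + 1)}

/-- the support function `f_ξ = ⟨ξ, N⟩` of an ambient vector field -/
def fsupp (hs : Hypersurface SM St) (ξ : ∀ p, St.T p) (p : M) : ℝ :=
  St.g (hs.x p) (ξ (hs.x p)) (hs.N p)

/-- the tangential projection `ξ^⊤ = ξ − ⟨ξ,N⟩N` of an ambient vector field along `x` -/
def tang (hs : Hypersurface SM St) (ξ : ∀ p, St.T p) (p : M) : St.T (hs.x p) :=
  ξ (hs.x p) - (St.g (hs.x p) (ξ (hs.x p)) (hs.N p)) • hs.N p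

/-- `x` is transversal to `ξ` at every point -/
def Transversal (hs : Hypersurface SM St) (ξ : ∀ p, St.T p) : Prop :=
  ∀ p, St.g (hs.x p) (ξ (hs.x p)) (hs.N p) ≠ 0

/-- boundedness of the norm of the second fundamental form: `|A|² = tr(A²) ≤ C` -/
def BoundedSecondFF (hs : Hypersurface SM St) : Prop :=
  ∃ C : ℝ, ∀ p, LinearMap.trace ℝ (SM.T p) (hs.A p ∘ₗ hs.A p) ≤ C

/-- `M` is totally geodesic: `A ≡ 0` -/
def TotallyGeodesic (hs : Hypersurface SM St) : Prop :=
  ∀ p, hs.A p = 0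

/-- `M` is totally umbilical: `A = H · Id` -/
def TotallyUmbilical (hs : Hypersurface SM St) : Prop :=
  ∀ p, hs.A p = hs.H p • LinearMap.id

end Hypersurface

/-- Data of an isometric immersion between Riemannian manifolds, together with its
mean curvature vector and the normal connection acting on normal fields along it. -/
structure ImmersionData {M M' : Type} [MetricSpace M] [MeasurableSpace M] [MetricSpace M'] [MeasurableSpace M'] {m N : ℕ} (SM : RiemannianManifold M m) (St : RiemannianManifold M' N) where
  f : M → M'
  df : ∀ p, SM.T p →ₗ[ℝ] St.T (f p)
  df_isom : ∀ p v w, St.g (f p) (df p v) (df p w) = SM.g p v w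
  /-- the mean curvature vector -/
  meanCurv : ∀ p, St.T (f p)
  meanCurv_normal : ∀ p v, St.g (f p) (meanCurv p) (df p v) = 0
  /-- the normal connection `∇^⊥` acting on normal fields along `f` -/
  ncov : (∀ p, SM.T p) → (∀ p, St.T (f p)) → (∀ p, St.T (f p))

namespace RiemannianManifold

variable {M : Type} [MetricSpace M] [MeasurableSpace M] {n : ℕ}

lemma g_zero_left (S : RiemannianManifold M n) (q : M) (v : S.T q) :
    S.g q (0 : S.T q) v = 0 := by
  have h := S.g_smul_left q 0 (0 : S.T q) v
  rw [zero_smul] at h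
  rw [h]; ring

lemma g_zero_right (S : RiemannianManifold M n) (q : M) (v : S.T q) :
    S.g q v (0 : S.T q) = 0 := by
  rw [S.g_symm]; exact S.g_zero_left q v

lemma g_sub_left (S : RiemannianManifold M n) (q : M) (u v w : S.T q) :
    S.g q (u - v) w = S.g q u w - S.g q v w := by
  have h : u - v = u + (-1 : ℝ) • v := by rw [neg_one_smul]; exact sub_eq_add_neg u v
  rw [h, S.g_add_left, S.g_smul_left]; ring

lemma g_add_right (S : RiemannianManifold M n) (q : M) (u v w : S.T q) :
    S.g q u (v + w) = S.g q u v + S.g q u w := by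
  rw [S.g_symm, S.g_add_left, S.g_symm q v u, S.g_symm q w u]

lemma g_sub_right (S : RiemannianManifold M n) (q : M) (u v w : S.T q) :
    S.g q u (v - w) = S.g q u v - S.g q u w := by
  rw [S.g_symm, S.g_sub_left, S.g_symm q v u, S.g_symm q w u]

lemma g_smul_right (S : RiemannianManifold M n) (q : M) (a : ℝ) (v w : S.T q) :
    S.g q v (a • w) = a * S.g q v w := by
  rw [S.g_symm, S.g_smul_left, S.g_symm q w v]

/-- If `g p v v = 0` then `v = 0`. -/
lemma eq_zero_of_g_self_eq_zero (S : RiemannianManifold M n) (p : M) (v : S.T p)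
    (h : S.g p v v = 0) : v = 0 := by
  by_contra hne
  exact absurd h (ne_of_gt (S.g_pos p v hne))

/-- Key scalar identity: for every vector field `W`, the pairing of the
tangential part of `∇_Z (η - ⟨η,ξ⟩ξ)` at `p` with `W p` is as predicted. -/
lemma master (S : RiemannianManifold M n)
    (ξ : ∀ p, S.T p) (ψξ : M → ℝ) (hccξ : S.ClosedConformal ξ ψξ)
    (η : ∀ p, S.T p) (ψη : M → ℝ) (hccη : S.ClosedConformal η ψη)
    (Z : ∀ p, S.T p) (hZ : S.Smooth Z) (p : M)
    (he : S.g p (ξ p) (ξ p) = 1) (hz : S.g p (Z p) (ξ p) = 0)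
    (W : ∀ q, S.T q) :
    S.g p ((S.cov Z (fun q => η q - (S.g q (η q) (ξ q)) • ξ q)) p) (W p)
      - S.g p (ξ p) (W p)
          * S.g p ((S.cov Z (fun q => η q - (S.g q (η q) (ξ q)) • ξ q)) p) (ξ p)
      = (ψη p - ψξ p * S.g p (η p) (ξ p)) * S.g p (Z p) (W p) := by
  classical
  set U : ∀ q, S.T q := fun q => η q - (S.g q (η q) (ξ q)) • ξ q with hU
  set A : ∀ q, S.T q :=
    fun q => (if q = p then (1 : ℝ) else 0) • (W q - (S.g q (ξ q) (W q)) • ξ q) with hA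
  have hcovξ : S.cov Z ξ = fun q => ψξ q • Z q := hccξ.2 Z hZ
  have hcovη : S.cov Z η = fun q => ψη q • Z q := hccη.2 Z hZ
  have hAp : A p = W p - (S.g p (ξ p) (W p)) • ξ p := by
    rw [hA]; simp
  have hξZ : S.g p (ξ p) (Z p) = 0 := by rw [S.g_symm]; exact hz
  -- A q = 0 off p
  have hA0 : ∀ q, q ≠ p → A q = 0 := by
    intro q hq
    rw [hA]
    simp only [if_neg hq, zero_smul]
  -- ⟨A, ξ⟩ is the zero function
  have hAξ0 : ∀ q, S.g q (A q) (ξ q) = 0 := by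
    intro q
    by_cases hq : q = p
    · subst hq
      rw [hAp, S.g_sub_left, S.g_smul_left, he, S.g_symm q (W q) (ξ q)]
      ring
    · rw [hA0 q hq, S.g_zero_left]
  -- Dvf of the zero function is zero (via compat on the zero field)
  have hDzero : S.Dvf Z (fun q => S.g q (A q) (ξ q)) p = 0 := by
    have hfz : (fun q => S.g q (A q) (ξ q))
        = (fun q => S.g q ((fun r => (0 : S.T r)) q) ((fun r => (0 : S.T r)) q)) := by
      funext q
      rw [hAξ0 q, S.g_zero_left]
    rw [hfz]
    have h := S.compat Z (fun r => (0 : S.T r)) (fun r => (0 : S.T r)) p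
    rw [h, S.g_zero_right, S.g_zero_left]
    ring
  -- ⟨A, U⟩ = ⟨A, η⟩ as functions
  have hfun : (fun q => S.g q (A q) (U q)) = (fun q => S.g q (A q) (η q)) := by
    funext q
    by_cases hq : q = p
    · subst hq
      have hAξ := hAξ0 q
      rw [hU]
      simp only
      rw [S.g_sub_right, S.g_smul_right, hAξ]
      ring
    · rw [hA0 q hq, S.g_zero_left, S.g_zero_left]
  -- compat instances
  have hE1 := S.compat Z A ξ p
  have hE2 := S.compat Z A η p
  have hE3 := S.compat Z A U p
  rw [hDzero, hcovξ] at hE1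
  rw [hcovη] at hE2
  rw [hfun] at hE3
  -- expand hE1 : 0 = ⟨B, ξ⟩ + ⟨A p, ψξ Z p⟩
  have hUp : U p = η p - (S.g p (η p) (ξ p)) • ξ p := by rw [hU]
  rw [hAp] at hE1 hE2 hE3
  rw [hUp] at hE3
  simp only [S.g_sub_left, S.g_sub_right, S.g_smul_left, S.g_smul_right] at hE1 hE2 hE3
  rw [hξZ] at hE1 hE2
  have sWZ : S.g p (W p) (Z p) = S.g p (Z p) (W p) := S.g_symm p (W p) (Z p)
  rw [sWZ] at hE1 hE2
  have sWV : S.g p (W p) ((S.cov Z U) p) = S.g p ((S.cov Z U) p) (W p) :=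
    S.g_symm p (W p) ((S.cov Z U) p)
  have sξV : S.g p (ξ p) ((S.cov Z U) p) = S.g p ((S.cov Z U) p) (ξ p) :=
    S.g_symm p (ξ p) ((S.cov Z U) p)
  rw [sWV, sξV] at hE3
  linear_combination hE2 - hE3 - S.g p (η p) (ξ p) * hE1

end RiemannianManifold

/-- If `ξ`, `η` are closed conformal vector fields on `M̃` with
conformal factors `ψ_ξ`, `ψ_η`, and `Ξ` is a leaf of `ξ^⊥` on which `⟨ξ,ξ⟩ = 1`, then
`U = η − ⟨η, ξ⟩ξ` is a closed conformal vector field on `Ξ` (for the induced metric,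
whose Levi-Civita connection is `D_Z U = (∇̃_Z U)^⊤`), with conformal factor
`ψ_U = ψ_η − ψ_ξ ⟨η, ξ⟩`. -/

theorem projected_field_closed_conformal_on_leaf
    {M : Type} [MetricSpace M] [MeasurableSpace M] {n : ℕ}
    (S : RiemannianManifold M n)
    (ξ : ∀ p, S.T p) (ψξ : M → ℝ) (hccξ : S.ClosedConformal ξ ψξ)
    (η : ∀ p, S.T p) (ψη : M → ℝ) (hccη : S.ClosedConformal η ψη)
    (L : Set M) (hleaf : ∀ p ∈ L, S.g p (ξ p) (ξ p) = 1) :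
    ∀ Z : ∀ p, S.T p, S.Smooth Z → (∀ p ∈ L, S.g p (Z p) (ξ p) = 0) →
      ∀ p ∈ L,
        (S.cov Z (fun q => η q - (S.g q (η q) (ξ q)) • ξ q)) p
            - (S.g p ((S.cov Z (fun q => η q - (S.g q (η q) (ξ q)) • ξ q)) p) (ξ p)) • ξ p
          = (ψη p - ψξ p * S.g p (η p) (ξ p)) • Z p := by
  intro Z hZsm hZperp p hp
  classical
  have he := hleaf p hp
  have hz := hZperp p hp
  set V : S.T p := (S.cov Z (fun q => η q - (S.g q (η q) (ξ q)) • ξ q)) p with hV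
  set E : S.T p :=
    V - (S.g p V (ξ p)) • ξ p - (ψη p - ψξ p * S.g p (η p) (ξ p)) • Z p with hE
  have hW : (Function.update (fun q => (0 : S.T q)) p E) p = E :=
    Function.update_self p E _
  have hm := S.master ξ ψξ hccξ η ψη hccη Z hZsm p he hz
      (Function.update (fun q => (0 : S.T q)) p E)
  rw [hW, ← hV] at hm
  have hEE : S.g p E E = 0 := by
    rw [hE]
    rw [S.g_sub_left, S.g_sub_left, S.g_smul_left, S.g_smul_left]
    rw [← hE]
    linarith [hm]
  have hE0 : E = 0 := S.eq_zero_of_g_self_eq_zero p E hEE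
  have := sub_eq_zero.mp (by rw [← hE] at *; exact hE0)
  calc (S.cov Z (fun q => η q - (S.g q (η q) (ξ q)) • ξ q)) p
        - (S.g p ((S.cov Z (fun q => η q - (S.g q (η q) (ξ q)) • ξ q)) p) (ξ p)) • ξ p
      = V - (S.g p V (ξ p)) • ξ p := by rw [hV]
    _ = (ψη p - ψξ p * S.g p (η p) (ξ p)) • Z p := this
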